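/- arXiv:0907.1471 — 2 statements merged into one kernel-verified Lean document; each statement's English description precedes it below -/
import Mathlib

section
/- For the Farey map F(x) = x/(1-x) for 0 ≤ x ≤ 1/2 and F(x) = (1-x)/x for 1/2 ≤ x ≤ 1, the induced map obtained by iterating F until first entering [1/2,1] coincides with the Gauss map: for x ∈ (0,1], F iterated ⌊1/x⌋ times applied to x equals the fractional part of 1/x. -/
noncomputable def fareyMap (x : ℝ) : ℝ := if x ≤ 1/2 then x / (1 - x) else (1 - x) / x

theorem farey_induced_is_gauss :
    ∀ x : ℝ, x ∈ Set.Ioc (0:ℝ) 1 →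
      fareyMap^[⌊1/x⌋₊] x = Int.fract (1/x) := by
  have key : ∀ n : ℕ, ∀ x : ℝ, x ∈ Set.Ioc (0:ℝ) 1 → ⌊1/x⌋₊ = n →
      fareyMap^[n] x = Int.fract (1/x) := by
    intro n
    induction n with
    | zero =>
      intro x hx h
      exfalso
      have h1 : (1:ℝ) ≤ 1/x := by
        rw [le_div_iff₀ hx.1]; simpa using hx.2
      have h2 : 1/x < 1 := by
        have := Nat.floor_eq_zero.mp h
        simpa using this
      linarith
    | succ m ih =>
      intro x hx h
      obtain ⟨hx0, hx1⟩ := hx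
      have hxpos : (0:ℝ) < 1/x := by positivity
      have hfl := (Nat.floor_eq_iff (le_of_lt hxpos)).mp h
      have hlo : ((m:ℝ)+1) ≤ 1/x := by
        have := hfl.1; push_cast at this; linarith
      have hhi : 1/x < (m:ℝ)+2 := by
        have := hfl.2; push_cast at this; linarith
      cases m with
      | zero =>
        have hx2 : 1/2 < x := by
          rw [div_lt_iff₀ hx0] at hhi; push_cast at hhi; linarith
        rw [Function.iterate_one, fareyMap, if_neg (not_le.mpr hx2)]
        have hif : ⌊1/x⌋ = 1 := by
          rw [Int.floor_eq_iff]
          constructor <;> push_cast <;> linarith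
        rw [Int.fract, hif, sub_div, div_self hx0.ne']
        push_cast; ring
      | succ m =>
        have hge2 : (2:ℝ) ≤ 1/x := by push_cast at hlo; linarith
        have hxle : x ≤ 1/2 := by
          rw [le_div_iff₀ hx0] at hge2; linarith
        have h1x : (0:ℝ) < 1 - x := by linarith
        set y := x / (1 - x) with hy
        have hy0 : 0 < y := div_pos hx0 h1x
        have hy1 : y ≤ 1 := by
          rw [div_le_one h1x]; linarith
        have h1y : 1/y = 1/x - 1 := by
          rw [hy, one_div_div, sub_div, div_self hx0.ne']
        have hfly : ⌊1/y⌋₊ = m + 1 := by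
          rw [Nat.floor_eq_iff (by rw [h1y]; push_cast at hlo; linarith)]
          rw [h1y]
          push_cast at hlo hhi ⊢
          constructor <;> linarith
        have step : fareyMap x = y := by
          rw [fareyMap, if_pos hxle]
        calc fareyMap^[m+1+1] x = fareyMap^[m+1] (fareyMap x) := by
              rw [Function.iterate_succ_apply]
          _ = Int.fract (1/y) := by rw [step]; exact ih y ⟨hy0, hy1⟩ hfly
          _ = Int.fract (1/x) := by
              rw [h1y]
              rw [show (1:ℝ) = ((1:ℤ):ℝ) by norm_cast, Int.fract_sub_intCast]
  intro x hx
  exact key _ x hx rfl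
end

section
/- Let V be the composition operator (V f)(x) = φ(x) f(ψ(x)) where ψ is holomorphic on a disk mapping it strictly inside itself with unique fixed point x̄ satisfying |ψ'(x̄)| < 1. If A ∈ SL(2,ℤ) is the Möbius matrix corresponding to a word (P_{0,q})^{n₁}(P_{1,q})^{n₂}⋯ of total length n > 1 containing at least one P_{1,q} factor, with trace T = trace(A), then T > 2 and trace of the corresponding composition operator equals (T²-4)^(-1/2) (2/(T+√(T²-4)))^(2q-1). -/
/-!
All entries of the word matrix `A = [[a, b], [c, d]]` are nonnegative, its bottom row is
positive, and a factor `φ₁` makes `b` positive; with `ad - bc = 1` this forces `T = a + d > 2`,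
so `T = r + r⁻¹` with `0 < r < 1`. At a fixed point `x₀` of `ψ` the denominator `u = c x₀ + d`
is a root of `u² - T u + 1`, i.e. `u ∈ {r, r⁻¹}`, and `ψ'(x₀) = u⁻²`; attraction selects
`u = r⁻¹`, so `ψ'(x₀) = r²`. Since `√(T² - 4) = r⁻¹ - r` and `2 / (T + √(T² - 4)) = r`, the claim
becomes `(r²)^q / (1 - r²) = (r⁻¹ - r)⁻¹ r^(2q-1)`.
-/

open Matrix

def wordMatrix (w : List Bool) : Matrix (Fin 2) (Fin 2) ℤ :=
  (w.map fun b => if b then !![0, 1; 1, 1] else !![1, 0; 1, 1]).prod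

namespace wordMatrix

variable (w : List Bool)

lemma nil : wordMatrix [] = 1 := rfl

lemma cons_false : wordMatrix (false :: w) =
    !![wordMatrix w 0 0, wordMatrix w 0 1;
      wordMatrix w 0 0 + wordMatrix w 1 0, wordMatrix w 0 1 + wordMatrix w 1 1] := by
  ext i j; fin_cases i <;> fin_cases j <;> simp [wordMatrix, mul_apply, Fin.sum_univ_two]

lemma cons_true : wordMatrix (true :: w) =
    !![wordMatrix w 1 0, wordMatrix w 1 1;
      wordMatrix w 0 0 + wordMatrix w 1 0, wordMatrix w 0 1 + wordMatrix w 1 1] := by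
  ext i j; fin_cases i <;> fin_cases j <;> simp [wordMatrix, mul_apply, Fin.sum_univ_two]

lemma apply_nonneg (i j : Fin 2) : 0 ≤ wordMatrix w i j := by
  induction w generalizing i j with
  | nil => rw [nil, one_apply]; split_ifs <;> simp
  | cons b w ih =>
    have := ih 0 0; have := ih 0 1; have := ih 1 0; have := ih 1 1
    cases b <;> fin_cases i <;> fin_cases j <;> simp [cons_false, cons_true] <;> omega

lemma one_le_apply_one_one : 1 ≤ wordMatrix w 1 1 := by
  induction w with
  | nil => simp [nil]
  | cons b w ih =>
    cases b <;> simp [cons_false, cons_true] <;> linarith [apply_nonneg w 0 1]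

lemma one_le_apply_zero_zero_add_apply_one_zero : 1 ≤ wordMatrix w 0 0 + wordMatrix w 1 0 := by
  induction w with
  | nil => simp [nil]
  | cons b w ih =>
    cases b <;> simp [cons_false, cons_true] <;> linarith [apply_nonneg w 0 0, apply_nonneg w 1 0]

lemma one_le_apply_one_zero (hw : w ≠ []) : 1 ≤ wordMatrix w 1 0 := by
  obtain ⟨b, w, rfl⟩ := List.exists_cons_of_ne_nil hw
  cases b <;> simpa [cons_false, cons_true] using one_le_apply_zero_zero_add_apply_one_zero w

lemma one_le_apply_zero_one (hw : true ∈ w) : 1 ≤ wordMatrix w 0 1 := by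
  induction w with
  | nil => simp at hw
  | cons b w ih =>
    cases b
    · simpa [cons_false] using ih (by simpa using hw)
    · simpa [cons_true] using one_le_apply_one_one w

end wordMatrix

lemma two_lt_trace_of_det_eq_one {A : Matrix (Fin 2) (Fin 2) ℤ} (ha : 0 ≤ A 0 0) (hd : 0 ≤ A 1 1)
    (hb : 0 < A 0 1) (hc : 0 < A 1 0) (hdet : A.det = 1) : 2 < A.trace := by
  rw [det_fin_two] at hdet
  rw [trace_fin_two]
  nlinarith [sq_nonneg (A 0 0 - A 1 1), mul_pos hb hc]

lemma exists_add_inv_eq {T : ℝ} (hT : 2 < T) : ∃ r : ℝ, 0 < r ∧ r < 1 ∧ r + r⁻¹ = T := by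
  set s := √(T ^ 2 - 4)
  have hs : s ^ 2 = T ^ 2 - 4 := Real.sq_sqrt (by nlinarith)
  have hs0 : 0 ≤ s := Real.sqrt_nonneg _
  have hr0 : 0 < T - s := by nlinarith
  refine ⟨(T - s) / 2, by linarith, by nlinarith, ?_⟩
  field_simp
  linear_combination hs

lemma eq_or_eq_inv_of_sq_sub_add_inv {u r : ℂ} (hr : r ≠ 0)
    (h : u ^ 2 - (r + r⁻¹) * u + 1 = 0) : u = r ∨ u = r⁻¹ := by
  have hfactor : (u - r) * (u - r⁻¹) = 0 := by
    linear_combination h + mul_inv_cancel₀ hr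
  simpa [sub_eq_zero] using hfactor

lemma ofReal_sq_cpow {r : ℝ} (hr : 0 < r) (q : ℂ) : ((r : ℂ) ^ 2) ^ q = (r : ℂ) ^ (2 * q) := by
  rw [sq, Complex.mul_cpow_ofReal_nonneg hr.le hr.le,
    ← Complex.cpow_add _ _ (by exact_mod_cast hr.ne'), two_mul]

lemma cpow_sq_div_one_sub_sq {r : ℝ} (hr0 : 0 < r) (hr1 : r < 1) (q : ℂ) :
    ((r : ℂ) ^ 2) ^ q / (1 - (r : ℂ) ^ 2) =
      (((r + r⁻¹ : ℝ) : ℂ) ^ 2 - 4) ^ (-(1/2 : ℂ)) *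
        (2 / ((r + r⁻¹ : ℝ) + (((r + r⁻¹ : ℝ) : ℂ) ^ 2 - 4) ^ ((1:ℂ)/2))) ^ (2 * q - 1) := by
  have hs : 0 < r⁻¹ - r := by linarith [one_lt_inv₀ hr0 |>.2 hr1]
  have hrC : (r : ℂ) ≠ 0 := by exact_mod_cast hr0.ne'
  have hdisc : ((r + r⁻¹ : ℝ) : ℂ) ^ 2 - 4 = ((r⁻¹ - r : ℝ) : ℂ) ^ 2 := by
    push_cast; field_simp; ring
  have hfrac : 2 / (((r + r⁻¹ : ℝ) : ℂ) + ((r⁻¹ - r : ℝ) : ℂ)) = r := by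
    push_cast; field_simp; ring
  rw [hdisc, ofReal_sq_cpow hs, ofReal_sq_cpow hs, ofReal_sq_cpow hr0,
    show (2 : ℂ) * (1/2) = 1 by norm_num, show (2 : ℂ) * -(1/2) = -1 by norm_num,
    Complex.cpow_one, Complex.cpow_neg_one, hfrac, Complex.cpow_sub _ _ hrC, Complex.cpow_one]
  have hden : (1 : ℂ) - r ^ 2 ≠ 0 := by
    exact_mod_cast (by nlinarith : (1 : ℝ) - r ^ 2 ≠ 0)
  push_cast
  field_simp

section Mobius

variable {a b c d x : ℂ}

lemma hasDerivAt_mobius (hdet : a * d - b * c = 1) (hx : c * x + d ≠ 0) :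
    HasDerivAt (fun x => (a * x + b) / (c * x + d)) ((c * x + d) ^ 2)⁻¹ x := by
  have hnum : HasDerivAt (fun x => a * x + b) a x := by
    simpa using ((hasDerivAt_id x).const_mul a).add_const b
  have hden : HasDerivAt (fun x => c * x + d) c x := by
    simpa using ((hasDerivAt_id x).const_mul c).add_const d
  refine (hnum.div hden hx).congr_deriv ?_
  rw [← one_div]
  congr 1
  linear_combination hdet

-- With `z / 0 = 0`, a pole of `ψ` can only be a (junk) fixed point at `x = 0`, forcing `d = 0`.
lemma mobius_denom_ne_zero_of_fixed (hd : d ≠ 0) (hfix : (a * x + b) / (c * x + d) = x) :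
    c * x + d ≠ 0 := by
  intro hx
  rw [hx, div_zero] at hfix
  simp [← hfix, hd] at hx

lemma mobius_denom_sq_sub_trace_mul_add_one_eq_zero (hdet : a * d - b * c = 1) (hx : c * x + d ≠ 0)
    (hfix : (a * x + b) / (c * x + d) = x) :
    (c * x + d) ^ 2 - (a + d) * (c * x + d) + 1 = 0 := by
  rw [div_eq_iff hx] at hfix
  linear_combination -c * hfix - hdet

lemma deriv_mobius_eq_sq_of_isFixedPt {r : ℝ} (hr0 : 0 < r) (hr1 : r < 1)
    (hdet : a * d - b * c = 1) (hd : d ≠ 0) (htr : a + d = r + (r : ℂ)⁻¹)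
    (hfix : (a * x + b) / (c * x + d) = x)
    (hattr : ‖deriv (fun x => (a * x + b) / (c * x + d)) x‖ < 1) :
    deriv (fun x => (a * x + b) / (c * x + d)) x = (r : ℂ) ^ 2 := by
  have hx := mobius_denom_ne_zero_of_fixed hd hfix
  have hquad := mobius_denom_sq_sub_trace_mul_add_one_eq_zero hdet hx hfix
  rw [htr] at hquad
  rw [(hasDerivAt_mobius hdet hx).deriv] at hattr ⊢
  rcases eq_or_eq_inv_of_sq_sub_add_inv (by exact_mod_cast hr0.ne') hquad with hu | hu
  · -- the repelling fixed point: `ψ'(x) = r⁻² > 1`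
    rw [hu, norm_inv, norm_pow, Complex.norm_real, Real.norm_of_nonneg hr0.le] at hattr
    nlinarith [one_lt_inv₀ (pow_pos hr0 2) |>.2 (pow_lt_one₀ hr0.le hr1 two_ne_zero)]
  · rw [hu, inv_pow, inv_inv]

theorem mobius_attracting_multiplier_cpow_div (hdet : a * d - b * c = 1) (hd : d ≠ 0) {T : ℝ}
    (hT : 2 < T) (htr : a + d = T) (hfix : (a * x + b) / (c * x + d) = x)
    (hattr : ‖deriv (fun x => (a * x + b) / (c * x + d)) x‖ < 1) (q : ℂ) :
    (deriv (fun x => (a * x + b) / (c * x + d)) x) ^ q /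
        (1 - deriv (fun x => (a * x + b) / (c * x + d)) x)
      = ((T : ℂ) ^ 2 - 4) ^ (-(1/2 : ℂ)) *
          (2 / ((T : ℂ) + ((T : ℂ) ^ 2 - 4) ^ ((1:ℂ)/2))) ^ (2 * q - 1) := by
  obtain ⟨r, hr0, hr1, rfl⟩ := exists_add_inv_eq hT
  rw [deriv_mobius_eq_sq_of_isFixedPt hr0 hr1 hdet hd (by exact_mod_cast htr) hfix hattr]
  exact cpow_sq_div_one_sub_sq hr0 hr1 q

end Mobius

theorem composition_operator_trace_general (q : ℂ)
    (w : List Bool) (hone : true ∈ w)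
    (A : Matrix (Fin 2) (Fin 2) ℤ)
    (hA : A = (w.map (fun b => if b then !![0, 1; 1, 1] else !![1, 0; 1, 1])).prod)
    (hdet : A.det = 1)
    (ψ : ℂ → ℂ)
    (hψ : ψ = fun x => ((A 0 0 : ℂ) * x + (A 0 1 : ℂ)) / ((A 1 0 : ℂ) * x + (A 1 1 : ℂ)))
    (x₀ : ℂ) (hfix : ψ x₀ = x₀) (hattr : ‖deriv ψ x₀‖ < 1) :
    2 < A.trace ∧
      (deriv ψ x₀) ^ q / (1 - deriv ψ x₀)
        = ((A.trace : ℂ) ^ 2 - 4) ^ (-(1/2 : ℂ)) *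
            (2 / ((A.trace : ℂ) + ((A.trace : ℂ) ^ 2 - 4) ^ ((1:ℂ)/2))) ^ (2 * q - 1) := by
  change A = wordMatrix w at hA
  subst hA hψ
  have hd := wordMatrix.one_le_apply_one_one w
  have hT := two_lt_trace_of_det_eq_one (wordMatrix.apply_nonneg w 0 0) (by omega)
    (wordMatrix.one_le_apply_zero_one w hone)
    (wordMatrix.one_le_apply_one_zero w (List.ne_nil_of_mem hone)) hdet
  refine ⟨hT, ?_⟩
  set P := wordMatrix w
  have hdetC : (P 0 0 : ℂ) * P 1 1 - P 0 1 * P 1 0 = 1 := by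
    rw [det_fin_two] at hdet; exact_mod_cast hdet
  have htr : (P 0 0 : ℂ) + P 1 1 = (P.trace : ℝ) := by
    push_cast [trace_fin_two]; rfl
  have hdC : (P 1 1 : ℂ) ≠ 0 := by exact_mod_cast (by omega : P 1 1 ≠ 0)
  exact_mod_cast mobius_attracting_multiplier_cpow_div hdetC hdC (by exact_mod_cast hT) htr
    hfix hattr q

theorem composition_operator_trace (q : ℂ) (hq : 0 < q.re)
    (w : List Bool) (hlen : 1 < w.length) (hone : true ∈ w)
    (A : Matrix (Fin 2) (Fin 2) ℤ)
    (hA : A = (w.map (fun b => if b then !![0, 1; 1, 1] else !![1, 0; 1, 1])).prod)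
    (hdet : A.det = 1)
    (ψ : ℂ → ℂ)
    (hψ : ψ = fun x => ((A 0 0 : ℂ) * x + (A 0 1 : ℂ)) / ((A 1 0 : ℂ) * x + (A 1 1 : ℂ)))
    (x₀ : ℂ) (hfix : ψ x₀ = x₀) (hattr : ‖deriv ψ x₀‖ < 1) :
    2 < A.trace ∧
      (deriv ψ x₀) ^ q / (1 - deriv ψ x₀)
        = ((A.trace : ℂ) ^ 2 - 4) ^ (-(1/2 : ℂ)) *
            (2 / ((A.trace : ℂ) + ((A.trace : ℂ) ^ 2 - 4) ^ ((1:ℂ)/2))) ^ (2 * q - 1) :=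
  composition_operator_trace_general q w hone A hA hdet ψ hψ x₀ hfix hattr
end
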